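/- Assume β > 0 satisfies 2βe^{−2τ} − 4τ − β ≥ 0. Then for every solution of the delayed Cucker–Smale system and almost every t > 2τ, the functional G is differentiable at t and satisfies (d/dt) G(t) ≤ 4∫_{t−τ}^{t} G(s−τ) ds − (N−1)·a̲(t)·G(t) + β(1 − e^{−2τ})·G(t−τ). -/

import Mathlib

/-!
At a time `t > 2τ` where `d_v` is differentiable (almost every time, by Rademacher's theorem,
since the speeds are locally bounded) write `d_v(t) = |v_p(t) - v_q(t)|` for an extremal pair.
Projected on `v_p - v_q`, each interaction term of `p` and of `q` splits into a consensus part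
`a_{ij} (v_j(t) - v_i(t))`, contributing `-a̲ d_v²` per agent, and a delay error of size at most
`2 ∫_{t-τ}^t max_i |v̇_i|`; hence `d_v' ≤ -(N-1) a̲ d_v + 4 ∫_{t-τ}^t max_i |v̇_i|`.
Written through antiderivatives, the memory term of `G` is differentiable for `t > 2τ`, with
derivative `(1 - e^{-2τ}) max_i |v̇_i(t)| - e^{-2τ} ∫_{t-2τ}^t max_i |v̇_i|` minus the memory term.
Since the weights of an agent sum to at most one,
`max_i |v̇_i(r)| ≤ d_v(r-τ) + ∫_{r-τ}^r max_i |v̇_i|`; integrating this over `[t-τ, t]` and using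
`2βe^{-2τ} - 4τ - β ≥ 0` absorbs every integral of `max_i |v̇_i|`.
-/

open scoped BigOperators
open MeasureTheory

/-- Diameter of a configuration `w` at time `t` (used for positions and velocities). -/
noncomputable def csDiam {N d : ℕ} (w : Fin N → ℝ → EuclideanSpace ℝ (Fin d)) (t : ℝ) : ℝ :=
  ⨆ i : Fin N, ⨆ j : Fin N, ‖w i t - w j t‖

/-- Maximum of the norms of `w' i t` over the agents `i`. -/
noncomputable def csMaxDer {N d : ℕ} (w' : Fin N → ℝ → EuclideanSpace ℝ (Fin d)) (t : ℝ) : ℝ :=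
  ⨆ i : Fin N, ‖w' i t‖

/-- Lyapunov–Krasovskii functional
`G(t) = d_v(t) + β ∫_{max(0,t-2τ)}^t e^{-(t-s)} ∫_s^t max_i |v̇_i(r)| dr ds`. -/
noncomputable def csG {N d : ℕ} (β τ : ℝ)
    (v v' : Fin N → ℝ → EuclideanSpace ℝ (Fin d)) (t : ℝ) : ℝ :=
  csDiam v t +
    β * ∫ s in (max 0 (t - 2 * τ))..t, Real.exp (-(t - s)) * ∫ r in s..t, csMaxDer v' r

/-- Minimal communication rate `a̲(t) = min_{i ≠ j} ψ(|x_i(t-σ) - x_j(t-τ)|)/(N-1)`. -/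
noncomputable def csAMin {N d : ℕ} (ψ : ℝ → ℝ) (σ τ : ℝ)
    (x : Fin N → ℝ → EuclideanSpace ℝ (Fin d)) (t : ℝ) : ℝ :=
  ⨅ p : {p : Fin N × Fin N // p.1 ≠ p.2},
    ψ ‖x p.val.1 (t - σ) - x p.val.2 (t - τ)‖ / (N - 1)

open Set Filter Real
open scoped RealInnerProductSpace

section FiniteSup

variable {N d : ℕ} (w : Fin N → ℝ → EuclideanSpace ℝ (Fin d))

lemma norm_sub_le_csDiam (t : ℝ) (i j : Fin N) : ‖w i t - w j t‖ ≤ csDiam w t :=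
  (le_ciSup (Finite.bddAbove_range _) j).trans
    (le_ciSup (Finite.bddAbove_range (fun i => ⨆ j, ‖w i t - w j t‖)) i)

lemma norm_le_csMaxDer (t : ℝ) (i : Fin N) : ‖w i t‖ ≤ csMaxDer w t :=
  le_ciSup (f := fun i => ‖w i t‖) (Finite.bddAbove_range _) i

variable [NeZero N]

lemma csDiam_nonneg (t : ℝ) : 0 ≤ csDiam w t :=
  (norm_nonneg _).trans (norm_sub_le_csDiam w t 0 0)

lemma csMaxDer_nonneg (t : ℝ) : 0 ≤ csMaxDer w t :=
  (norm_nonneg _).trans (norm_le_csMaxDer w t 0)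

lemma exists_csDiam_eq (t : ℝ) : ∃ p q, csDiam w t = ‖w p t - w q t‖ := by
  obtain ⟨p, hp⟩ := Finite.exists_max fun i => ⨆ j, ‖w i t - w j t‖
  obtain ⟨q, hq⟩ := Finite.exists_max fun j => ‖w p t - w j t‖
  exact ⟨p, q, le_antisymm (ciSup_le fun i => (hp i).trans (ciSup_le hq))
    (norm_sub_le_csDiam w t p q)⟩

lemma csDiam_le_add_of_norm_sub_le {s s' δ : ℝ} (h : ∀ i, ‖w i s - w i s'‖ ≤ δ) :
    csDiam w s ≤ csDiam w s' + 2 * δ :=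
  ciSup_le fun i => ciSup_le fun j => by
    have hj : ‖w j s' - w j s‖ ≤ δ := norm_sub_rev (w j s) _ ▸ h j
    calc ‖w i s - w j s‖ ≤ ‖w i s - w i s'‖ + ‖w i s' - w j s'‖ + ‖w j s' - w j s‖ := by
          simpa only [dist_eq_norm] using dist_triangle4 (w i s) (w i s') (w j s') (w j s)
      _ ≤ csDiam w s' + 2 * δ := by linarith [h i, norm_sub_le_csDiam w s' i j]

lemma ContinuousOn.ciSup_fin {s : Set ℝ} {f : Fin N → ℝ → ℝ} (hf : ∀ i, ContinuousOn (f i) s) :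
    ContinuousOn (fun t => ⨆ i, f i t) s := by
  simpa only [← Finset.sup'_univ_eq_ciSup] using
    ContinuousOn.finset_sup'_apply Finset.univ_nonempty fun i _ => hf i

lemma continuousOn_csDiam {s : Set ℝ} (hw : ∀ i, ContinuousOn (w i) s) :
    ContinuousOn (csDiam w) s :=
  ContinuousOn.ciSup_fin fun i => ContinuousOn.ciSup_fin fun j => ((hw i).sub (hw j)).norm

end FiniteSup

section Coefficients

variable {N d : ℕ}

lemma sum_erase_div_le_one {c : Fin N → ℝ} (hc : ∀ j, c j ≤ 1) (i : Fin N) :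
    ∑ j ∈ Finset.univ.erase i, c j / ((N : ℝ) - 1) ≤ 1 := by
  have hN : (1 : ℝ) ≤ N := by exact_mod_cast i.pos
  rw [← Finset.sum_div]
  refine div_le_one_of_le₀ ?_ (by linarith)
  calc ∑ j ∈ Finset.univ.erase i, c j ≤ ∑ _j ∈ Finset.univ.erase i, (1 : ℝ) :=
        Finset.sum_le_sum fun j _ => hc j
    _ = (N : ℝ) - 1 := by simp [Finset.card_erase_of_mem, Nat.cast_sub i.pos]

lemma div_nonneg_of_mem_fin (i : Fin N) {c : ℝ} (hc : 0 ≤ c) : 0 ≤ c / ((N : ℝ) - 1) :=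
  div_nonneg hc (sub_nonneg.2 (Nat.one_le_cast.2 i.pos))

variable {ψ : ℝ → ℝ} {σ τ : ℝ} {x : Fin N → ℝ → EuclideanSpace ℝ (Fin d)}

lemma csAMin_le (t : ℝ) {i j : Fin N} (hij : i ≠ j) :
    csAMin ψ σ τ x t ≤ ψ ‖x i (t - σ) - x j (t - τ)‖ / ((N : ℝ) - 1) :=
  ciInf_le (f := fun p : {p : Fin N × Fin N // p.1 ≠ p.2} =>
    ψ ‖x p.val.1 (t - σ) - x p.val.2 (t - τ)‖ / ((N : ℝ) - 1)) (Finite.bddBelow_range _)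
    ⟨(i, j), hij⟩

lemma csAMin_nonneg (hψpos : ∀ s, 0 ≤ s → 0 < ψ s) (t : ℝ) : 0 ≤ csAMin ψ σ τ x t :=
  Real.iInf_nonneg fun p => div_nonneg_of_mem_fin p.val.1 (hψpos _ (norm_nonneg _)).le

lemma mul_csAMin_le_one (hN : 2 ≤ N) (hψbdd : ∀ s, 0 ≤ s → ψ s ≤ 1) (t : ℝ) :
    ((N : ℝ) - 1) * csAMin ψ σ τ x t ≤ 1 := by
  have hN1 : (0 : ℝ) < (N : ℝ) - 1 := by
    have : (2 : ℝ) ≤ N := by exact_mod_cast hN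
    linarith
  let i : Fin N := ⟨0, by omega⟩
  let j : Fin N := ⟨1, by omega⟩
  calc ((N : ℝ) - 1) * csAMin ψ σ τ x t
      ≤ ((N : ℝ) - 1) * (ψ ‖x i (t - σ) - x j (t - τ)‖ / ((N : ℝ) - 1)) :=
        mul_le_mul_of_nonneg_left (csAMin_le t (by simp [i, j, Fin.ext_iff])) hN1.le
    _ ≤ 1 := by rw [mul_div_cancel₀ _ hN1.ne']; exact hψbdd _ (norm_nonneg _)

end Coefficients

lemma norm_sum_smul_le {ι E : Type*} [SeminormedAddCommGroup E] [NormedSpace ℝ E]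
    (s : Finset ι) {c : ι → ℝ} {w : ι → E} {K : ℝ} (hc : ∀ j ∈ s, 0 ≤ c j)
    (hsum : ∑ j ∈ s, c j ≤ 1) (hw : ∀ j ∈ s, ‖w j‖ ≤ K) (hK : 0 ≤ K) :
    ‖∑ j ∈ s, c j • w j‖ ≤ K :=
  calc ‖∑ j ∈ s, c j • w j‖ ≤ ∑ j ∈ s, c j * K := by
        refine (norm_sum_le _ _).trans (Finset.sum_le_sum fun j hj => ?_)
        rw [norm_smul, Real.norm_of_nonneg (hc j hj)]
        exact mul_le_mul_of_nonneg_left (hw j hj) (hc j hj)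
    _ ≤ K := by rw [← Finset.sum_mul]; exact mul_le_of_le_one_left hK hsum

section Trajectory

variable {N d : ℕ} {v v' : Fin N → ℝ → EuclideanSpace ℝ (Fin d)} {m : ℝ → ℝ}
  (hvder : ∀ i, ∀ t > (0 : ℝ), HasDerivAt (v i) (v' i t) t)
  (hm : Continuous m) (hmv : EqOn (csMaxDer v') m (Ioi 0))
include hmv

omit hvder hm in
lemma nonneg_of_eqOn_csMaxDer [NeZero N] {r : ℝ} (hr : 0 < r) : 0 ≤ m r :=
  hmv hr ▸ csMaxDer_nonneg v' r

omit hvder hm in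
lemma integral_nonneg_of_eqOn_csMaxDer [NeZero N] {a b : ℝ} (ha : 0 < a) (hab : a ≤ b) :
    0 ≤ ∫ r in a..b, m r :=
  intervalIntegral.integral_nonneg hab fun _ hr => nonneg_of_eqOn_csMaxDer hmv (ha.trans_le hr.1)

include hvder hm

lemma norm_sub_le_integral {a b : ℝ} (ha : 0 < a) (hab : a ≤ b) (i : Fin N) :
    ‖v i b - v i a‖ ≤ ∫ r in a..b, m r := by
  have hpos : ∀ t ∈ Icc a b, 0 < t := fun t ht => ha.trans_le ht.1
  refine norm_sub_le_integral_of_norm_deriv_le_of_le hab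
    (fun t ht => (hvder i t (hpos t ht)).continuousAt.continuousWithinAt)
    (fun t ht => (hvder i t (hpos t (Ioo_subset_Icc_self ht))).differentiableAt
      |>.differentiableWithinAt) (ae_of_all _ fun t ht => ?_) (hm.intervalIntegrable a b)
  have ht := hpos t (Ioo_subset_Icc_self ht)
  rw [(hvder i t ht).deriv, ← hmv ht]
  exact norm_le_csMaxDer v' t i

lemma norm_sub_le_integral_of_le [NeZero N] {c a b e : ℝ} (hc : 0 < c) (hca : c ≤ a) (hab : a ≤ b)
    (hbe : b ≤ e) (i : Fin N) : ‖v i b - v i a‖ ≤ ∫ r in c..e, m r :=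
  (norm_sub_le_integral hvder hm hmv (hc.trans_le hca) hab i).trans <|
    intervalIntegral.integral_mono_interval hca hab hbe
      ((ae_restrict_iff' measurableSet_Ioc).2 <| ae_of_all _ fun _ hr =>
        nonneg_of_eqOn_csMaxDer hmv (hc.trans hr.1))
      (hm.intervalIntegrable c e)

lemma lipschitzOnWith_csDiam [NeZero N] {a : ℝ} (ha : 0 < a) (b : ℝ) :
    ∃ K, LipschitzOnWith K (csDiam v) (Icc a b) := by
  obtain ⟨C, hC⟩ := isCompact_Icc.exists_bound_of_continuousOn hm.continuousOn (s := Icc a b)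
  have hvlip : ∀ i, LipschitzOnWith C.toNNReal (v i) (Icc a b) := fun i =>
    (convex_Icc a b).lipschitzOnWith_of_nnnorm_hasDerivWithin_le
      (fun t ht => (hvder i t (ha.trans_le ht.1)).hasDerivWithinAt) fun t ht => by
        rw [← NNReal.coe_le_coe, coe_nnnorm, Real.coe_toNNReal']
        refine le_max_of_le_left ((norm_le_csMaxDer v' t i).trans ?_)
        rw [hmv (ha.trans_le ht.1)]
        exact (le_abs_self _).trans (hC t ht)
  refine ⟨2 * C.toNNReal, LipschitzOnWith.of_le_add_mul _ fun s hs s' hs' => ?_⟩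
  have := csDiam_le_add_of_norm_sub_le v (s := s) (s' := s') (δ := C.toNNReal * dist s s')
    fun i => by simpa [dist_eq_norm] using (hvlip i).dist_le_mul s hs s' hs'
  push_cast
  linarith

end Trajectory

lemma ae_differentiableAt_of_lipschitzOnWith_Icc {f : ℝ → ℝ} {c : ℝ}
    (h : ∀ b, ∃ K, LipschitzOnWith K f (Icc c b)) : ∀ᵐ t, c < t → DifferentiableAt ℝ f t := by
  have hn : ∀ n : ℕ, ∀ᵐ t, t ∈ Icc c (c + n) → DifferentiableWithinAt ℝ f (Icc c (c + n)) t :=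
    fun n => (h (c + n)).choose_spec.ae_differentiableWithinAt_of_mem
  filter_upwards [ae_all_iff.2 hn] with t ht hct
  obtain ⟨n, hn⟩ := exists_nat_gt (t - c)
  exact (ht n ⟨hct.le, by linarith⟩).differentiableAt (Icc_mem_nhds hct (by linarith))

lemma ContinuousOn.comp_sub_const {E : Type*} [TopologicalSpace E] {f : ℝ → E} {τ c : ℝ}
    (hf : ContinuousOn f (Ici (-τ))) (hc : c ≤ τ) : ContinuousOn (fun t => f (t - c)) (Ici 0) :=
  hf.comp (continuousOn_id.sub continuousOn_const) fun t (ht : 0 ≤ t) =>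
    show -τ ≤ t - c by linarith

lemma ContinuousOn.intervalIntegrable_comp_sub_const {f : ℝ → ℝ} {a c t₀ t₁ : ℝ}
    (hf : ContinuousOn f (Ici a)) (ha : a ≤ t₀ - c) (ht : t₀ ≤ t₁) :
    IntervalIntegrable (fun s => f (s - c)) volume t₀ t₁ :=
  (hf.comp (continuousOn_id.sub continuousOn_const) fun s hs =>
    show a ≤ s - c by linarith [hs.1]).intervalIntegrable_of_Icc ht

lemma exists_continuous_eqOn_csMaxDer {N d : ℕ} [NeZero N] {ψ : ℝ → ℝ} {σ τ : ℝ}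
    {x v v' : Fin N → ℝ → EuclideanSpace ℝ (Fin d)} (hστ : σ ≤ τ)
    (hψcont : ContinuousOn ψ (Ici 0))
    (hxc : ∀ i, ContinuousOn (x i) (Ici (-τ))) (hvc : ∀ i, ContinuousOn (v i) (Ici (-τ)))
    (hode : ∀ i, ∀ t > (0 : ℝ), v' i t = ∑ j ∈ Finset.univ.erase i,
        (ψ ‖x i (t - σ) - x j (t - τ)‖ / ((N : ℝ) - 1)) • (v j (t - τ) - v i (t - σ))) :
    ∃ m : ℝ → ℝ, Continuous m ∧ EqOn (csMaxDer v') m (Ioi 0) := by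
  set F : Fin N → ℝ → EuclideanSpace ℝ (Fin d) := fun i t => ∑ j ∈ Finset.univ.erase i,
    (ψ ‖x i (t - σ) - x j (t - τ)‖ / ((N : ℝ) - 1)) • (v j (t - τ) - v i (t - σ))
  have hF : ∀ i, ContinuousOn (F i) (Ici 0) := fun i =>
    continuousOn_finsetSum _ fun j _ =>
      ((hψcont.comp ((hxc i).comp_sub_const hστ |>.sub
        ((hxc j).comp_sub_const le_rfl)).norm fun _ _ => norm_nonneg _).div_const _).smul
      (((hvc j).comp_sub_const le_rfl).sub ((hvc i).comp_sub_const hστ))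
  -- clamping at `0` extends `csMaxDer F` continuously from `[0, ∞)` to `ℝ`
  refine ⟨fun r => csMaxDer F (max r 0), ?_, fun r (hr : 0 < r) => ?_⟩
  · exact (ContinuousOn.ciSup_fin fun i => (hF i).norm).comp_continuous
      (continuous_id.max continuous_const) fun r => le_max_right r 0
  · simp only [max_eq_left hr.le, csMaxDer, F, hode _ r hr]

section InnerProduct

variable {E : Type*} [NormedAddCommGroup E] [InnerProductSpace ℝ E]

lemma inner_sum_smul_le {ι : Type*} (s : Finset ι) {c : ι → ℝ} {u w : ι → E} {y z : E}
    {a ε : ℝ} (ha : 0 ≤ a) (hε : 0 ≤ ε) (hac : ∀ j ∈ s, a ≤ c j) (hc : ∑ j ∈ s, c j ≤ 1)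
    (hmax : ∀ j ∈ s, ⟪y, u j⟫ ≤ ⟪y, z⟫) (hw : ∀ j ∈ s, ‖w j - (u j - z)‖ ≤ ε) :
    ⟪y, ∑ j ∈ s, c j • w j⟫ ≤ a * ∑ j ∈ s, ⟪y, u j - z⟫ + ‖y‖ * ε := by
  have hterm : ∀ j ∈ s, ⟪y, c j • w j⟫ ≤ a * ⟪y, u j - z⟫ + c j * (‖y‖ * ε) := fun j hj => by
    have hcj : 0 ≤ c j := ha.trans (hac j hj)
    have hdir : ⟪y, u j - z⟫ ≤ 0 := by rw [inner_sub_right]; linarith [hmax j hj]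
    have herr : ⟪y, w j - (u j - z)⟫ ≤ ‖y‖ * ε :=
      (real_inner_le_norm _ _).trans (mul_le_mul_of_nonneg_left (hw j hj) (norm_nonneg y))
    have hsplit : ⟪y, w j⟫ = ⟪y, u j - z⟫ + ⟪y, w j - (u j - z)⟫ := by
      rw [inner_sub_right y (w j)]; ring
    rw [real_inner_smul_right, hsplit]
    nlinarith [mul_le_mul_of_nonneg_left herr hcj, mul_le_mul_of_nonpos_right (hac j hj) hdir]
  calc ⟪y, ∑ j ∈ s, c j • w j⟫ ≤ ∑ j ∈ s, (a * ⟪y, u j - z⟫ + c j * (‖y‖ * ε)) := by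
        rw [inner_sum]; exact Finset.sum_le_sum hterm
    _ ≤ a * ∑ j ∈ s, ⟪y, u j - z⟫ + ‖y‖ * ε := by
        rw [Finset.sum_add_distrib, ← Finset.mul_sum, ← Finset.sum_mul]
        linarith [mul_le_of_le_one_left (mul_nonneg (norm_nonneg y) hε) hc]

lemma mul_deriv_eq_inner_of_norm_le {g : ℝ → ℝ} {f : ℝ → E} {f' : E} {t : ℝ}
    (hg : DifferentiableAt ℝ g t) (hf : HasDerivAt f f' t) (hle : ∀ s, ‖f s‖ ≤ g s)
    (heq : ‖f t‖ = g t) : g t * deriv g t = ⟪f t, f'⟫ := by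
  have hmin : IsLocalMin (fun s => g s ^ 2 - ‖f s‖ ^ 2) t := Eventually.of_forall fun s => by
    simp only [heq, sub_self, sub_nonneg]
    exact pow_le_pow_left₀ (norm_nonneg _) (hle s) 2
  have := hmin.hasDerivAt_eq_zero (hg.hasDerivAt.pow 2 |>.sub hf.norm_sq)
  norm_num at this
  linarith

end InnerProduct

lemma inner_le_inner_of_csDiam_eq {N d : ℕ} (w : Fin N → ℝ → EuclideanSpace ℝ (Fin d)) (t : ℝ)
    {p q : Fin N} (h : csDiam w t = ‖w p t - w q t‖) (j : Fin N) :
    ⟪w p t - w q t, w j t⟫ ≤ ⟪w p t - w q t, w p t⟫ := by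
  have : ⟪w p t - w q t, w j t - w q t⟫ ≤ ⟪w p t - w q t, w p t - w q t⟫ := by
    rw [real_inner_self_eq_norm_mul_norm]
    exact (real_inner_le_norm _ _).trans <| mul_le_mul_of_nonneg_left
      (h ▸ norm_sub_le_csDiam w t j q) (norm_nonneg _)
  simp only [inner_sub_right] at this
  linarith

section ExpMemory

noncomputable def expMemory (f : ℝ → ℝ) (a u : ℝ) : ℝ :=
  ∫ s in a..u, rexp (-(u - s)) * ∫ r in s..u, f r

variable {f : ℝ → ℝ}

lemma expMemory_congr {g : ℝ → ℝ} (h : EqOn f g (Ioi 0)) {a u : ℝ} (ha : 0 ≤ a) (hu : 0 ≤ u) :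
    expMemory f a u = expMemory g a u :=
  intervalIntegral.integral_congr fun s hs => by
    have hs0 : 0 ≤ s := le_min ha hu |>.trans hs.1
    congr 1
    exact intervalIntegral.integral_congr_ae <| ae_of_all _ fun r hr =>
      h ((le_min hs0 hu).trans_lt hr.1)

lemma expMemory_nonneg (hf : ∀ r, 0 ≤ f r) {a u : ℝ} (hau : a ≤ u) : 0 ≤ expMemory f a u :=
  intervalIntegral.integral_nonneg hau fun _ hs =>
    mul_nonneg (exp_pos _).le (intervalIntegral.integral_nonneg hs.2 fun r _ => hf r)

variable (hf : Continuous f)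
include hf

lemma expMemory_eq {W H : ℝ → ℝ} (hW : ∀ y, HasDerivAt W (f y) y)
    (hH : ∀ y, HasDerivAt H (rexp y * W y) y) (a u : ℝ) :
    expMemory f a u = (1 - rexp (a - u)) * W u - rexp (-u) * (H u - H a) := by
  have hWc : Continuous W := continuous_iff_continuousAt.2 fun y => (hW y).continuousAt
  have hint : ∀ s, (rexp (-(u - s)) * ∫ r in s..u, f r) =
      rexp (-u) * (W u * rexp s - rexp s * W s) := fun s => by
    rw [intervalIntegral.integral_eq_sub_of_hasDerivAt (fun y _ => hW y)
      (hf.intervalIntegrable _ _), neg_sub, sub_eq_add_neg, exp_add]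
    ring
  unfold expMemory
  simp only [hint, intervalIntegral.integral_const_mul]
  rw [intervalIntegral.integral_sub (f := fun s => W u * rexp s) (g := fun s => rexp s * W s)
      ((continuous_const.mul continuous_exp).intervalIntegrable _ _)
      ((continuous_exp.mul hWc).intervalIntegrable _ _), intervalIntegral.integral_const_mul,
    integral_exp, intervalIntegral.integral_eq_sub_of_hasDerivAt (fun y _ => hH y)
      ((continuous_exp.mul hWc).intervalIntegrable _ _), sub_eq_add_neg a, exp_add]
  have : rexp (-u) * rexp u = 1 := by rw [← exp_add, neg_add_cancel, exp_zero]
  linear_combination W u * this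

lemma exists_expMemory_antiderivatives : ∃ W H : ℝ → ℝ, (∀ y, HasDerivAt W (f y) y) ∧
    ∀ y, HasDerivAt H (rexp y * W y) y := by
  have hW : ∀ y, HasDerivAt (fun y => ∫ r in 0..y, f r) (f y) y := fun y =>
    (hf.integral_hasStrictDerivAt 0 y).hasDerivAt
  have hWc := continuous_iff_continuousAt.2 fun y => (hW y).continuousAt
  exact ⟨_, _, hW, fun y => ((continuous_exp.mul hWc).integral_hasStrictDerivAt 0 y).hasDerivAt⟩

lemma continuous_expMemory {a : ℝ → ℝ} (ha : Continuous a) :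
    Continuous fun u => expMemory f (a u) u := by
  obtain ⟨W, H, hW, hH⟩ := exists_expMemory_antiderivatives hf
  have hWc : Continuous W := continuous_iff_continuousAt.2 fun y => (hW y).continuousAt
  have hHc : Continuous H := continuous_iff_continuousAt.2 fun y => (hH y).continuousAt
  simp only [expMemory_eq hf hW hH]
  fun_prop

lemma hasDerivAt_expMemory (c t : ℝ) :
    HasDerivAt (fun u => expMemory f (u - c) u)
      ((1 - rexp (-c)) * f t - rexp (-c) * (∫ r in (t - c)..t, f r) - expMemory f (t - c) t) t := by
  obtain ⟨W, H, hW, hH⟩ := exists_expMemory_antiderivatives hf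
  have hshift : ∀ u, u - c - u = -c := fun u => by ring
  simp only [expMemory_eq hf hW hH, hshift]
  have hHc : HasDerivAt (fun u => H (u - c)) (rexp (t - c) * W (t - c)) t := by
    simpa using (hH (t - c)).comp_sub_const t c
  refine ((((hW t).const_mul (1 - rexp (-c))).sub
    ((hasDerivAt_neg t).exp.mul ((hH t).sub hHc)))).congr_deriv ?_
  rw [intervalIntegral.integral_eq_sub_of_hasDerivAt (fun y _ => hW y) (hf.intervalIntegrable _ _),
    sub_eq_add_neg t c, exp_add]
  have : rexp (-t) * rexp t = 1 := by rw [← exp_add, neg_add_cancel, exp_zero]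
  simp only [Pi.sub_apply]
  linear_combination (-W t + rexp (-c) * W (t + -c)) * this

end ExpMemory

section Functional

variable {N d : ℕ} {β τ : ℝ} {v v' : Fin N → ℝ → EuclideanSpace ℝ (Fin d)} {m : ℝ → ℝ}

lemma csG_eq_expMemory (hmv : EqOn (csMaxDer v') m (Ioi 0)) {u : ℝ} (hu : 0 ≤ u) :
    csG β τ v v' u = csDiam v u + β * expMemory m (max 0 (u - 2 * τ)) u :=
  congrArg (csDiam v u + β * ·) (expMemory_congr hmv (le_max_left _ _) hu)

lemma hasDerivAt_csG (hτ : 0 ≤ τ) (hm : Continuous m) (hmv : EqOn (csMaxDer v') m (Ioi 0))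
    {t : ℝ} (ht : 2 * τ < t) (hdiff : DifferentiableAt ℝ (csDiam v) t) :
    HasDerivAt (csG β τ v v') (deriv (csDiam v) t + β * ((1 - rexp (-(2 * τ))) * m t -
      rexp (-(2 * τ)) * (∫ r in (t - 2 * τ)..t, m r) - expMemory m (t - 2 * τ) t)) t :=
  (hdiff.hasDerivAt.add ((hasDerivAt_expMemory hm (2 * τ) t).const_mul β)).congr_of_eventuallyEq <|
    (eventually_gt_nhds ht).mono fun u hu => by
      change csG β τ v v' u = csDiam v u + β * expMemory m (u - 2 * τ) u
      rw [csG_eq_expMemory hmv (by linarith), max_eq_right (by linarith)]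

variable [NeZero N]

lemma csDiam_le_csG (hβ : 0 ≤ β) (hτ : 0 ≤ τ) {u : ℝ} (hu : 0 ≤ u) :
    csDiam v u ≤ csG β τ v v' u :=
  le_add_of_nonneg_right <| mul_nonneg hβ <|
    expMemory_nonneg (csMaxDer_nonneg v') (max_le hu (by linarith))

lemma continuousOn_csG (hτ : 0 ≤ τ) (hvc : ∀ i, ContinuousOn (v i) (Ici (-τ)))
    (hm : Continuous m) (hmv : EqOn (csMaxDer v') m (Ioi 0)) :
    ContinuousOn (csG β τ v v') (Ici 0) :=
  (((continuousOn_csDiam v hvc).mono (Ici_subset_Ici.2 (by linarith))).add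
    ((continuous_expMemory hm (continuous_const.max (continuous_id.sub continuous_const))).const_mul
      β).continuousOn).congr fun _ hu => csG_eq_expMemory hmv hu

end Functional

section Consensus

variable {N d : ℕ} [NeZero N] {ψ : ℝ → ℝ} {σ τ : ℝ}
  {x v v' : Fin N → ℝ → EuclideanSpace ℝ (Fin d)} {m : ℝ → ℝ}
  (hψpos : ∀ s, 0 ≤ s → 0 < ψ s) (hψbdd : ∀ s, 0 ≤ s → ψ s ≤ 1) (hσ : 0 ≤ σ) (hστ : σ ≤ τ)
  (hvder : ∀ i, ∀ t > (0 : ℝ), HasDerivAt (v i) (v' i t) t)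
  (hode : ∀ i, ∀ t > (0 : ℝ), v' i t = ∑ j ∈ Finset.univ.erase i,
    (ψ ‖x i (t - σ) - x j (t - τ)‖ / ((N : ℝ) - 1)) • (v j (t - τ) - v i (t - σ)))
  (hm : Continuous m) (hmv : EqOn (csMaxDer v') m (Ioi 0))
include hψpos hψbdd hσ hστ hvder hode hm hmv

lemma csMaxDer_le_csDiam_add_integral {r : ℝ} (hr : τ < r) :
    csMaxDer v' r ≤ csDiam v (r - τ) + ∫ s in (r - τ)..r, m s := by
  have hr' : 0 < r - τ := by linarith
  have hA : 0 ≤ ∫ s in (r - τ)..r, m s := integral_nonneg_of_eqOn_csMaxDer hmv hr' (by linarith)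
  refine ciSup_le fun i => ?_
  rw [hode i r (by linarith)]
  refine norm_sum_smul_le _ (fun j _ => div_nonneg_of_mem_fin i (hψpos _ (norm_nonneg _)).le)
    (sum_erase_div_le_one (fun j => hψbdd _ (norm_nonneg _)) i) (fun j _ => ?_)
    (add_nonneg (csDiam_nonneg v _) hA)
  calc ‖v j (r - τ) - v i (r - σ)‖ ≤ ‖v j (r - τ) - v i (r - τ)‖ + ‖v i (r - τ) - v i (r - σ)‖ :=
        norm_sub_le_norm_sub_add_norm_sub _ _ _
    _ ≤ csDiam v (r - τ) + ∫ s in (r - τ)..r, m s := by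
        rw [norm_sub_rev (v i _)]
        exact add_le_add (norm_sub_le_csDiam v _ j i)
          (norm_sub_le_integral_of_le hvder hm hmv hr' le_rfl (by linarith) (by linarith) i)

lemma inner_deriv_le_of_forall_inner_le {t : ℝ} (ht : τ < t) {y : EuclideanSpace ℝ (Fin d)}
    {i : Fin N} (hmax : ∀ j, ⟪y, v j t⟫ ≤ ⟪y, v i t⟫) :
    ⟪y, v' i t⟫ ≤ csAMin ψ σ τ x t * ∑ j, ⟪y, v j t - v i t⟫ +
      ‖y‖ * (2 * ∫ r in (t - τ)..t, m r) := by
  have ht' : 0 < t - τ := by linarith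
  have hA : 0 ≤ ∫ r in (t - τ)..t, m r := integral_nonneg_of_eqOn_csMaxDer hmv ht' (by linarith)
  rw [hode i t (by linarith), ← Finset.sum_erase (f := fun j => ⟪y, v j t - v i t⟫) Finset.univ
    (show ⟪y, v i t - v i t⟫ = 0 by simp)]
  refine inner_sum_smul_le _ (csAMin_nonneg hψpos t) (by linarith)
    (fun j hj => csAMin_le t (Finset.ne_of_mem_erase hj).symm)
    (sum_erase_div_le_one (fun j => hψbdd _ (norm_nonneg _)) i) (fun j _ => hmax j) fun j _ => ?_
  calc ‖v j (t - τ) - v i (t - σ) - (v j t - v i t)‖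
      = ‖(v j (t - τ) - v j t) + (v i t - v i (t - σ))‖ := by congr 1; abel
    _ ≤ ‖v j t - v j (t - τ)‖ + ‖v i t - v i (t - σ)‖ := by
        rw [norm_sub_rev (v j _)]; exact norm_add_le _ _
    _ ≤ 2 * ∫ r in (t - τ)..t, m r := by
        have hj := norm_sub_le_integral_of_le hvder hm hmv ht' (a := t - τ) (b := t) le_rfl
          (by linarith) le_rfl j
        have hi := norm_sub_le_integral_of_le hvder hm hmv ht' (a := t - σ) (b := t) (by linarith)
          (by linarith) le_rfl i
        linarith

lemma deriv_csDiam_le {t : ℝ} (ht : τ < t) (hdiff : DifferentiableAt ℝ (csDiam v) t) :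
    deriv (csDiam v) t ≤
      -(((N : ℝ) - 1) * csAMin ψ σ τ x t * csDiam v t) + 4 * ∫ r in (t - τ)..t, m r := by
  have ht' : 0 < t - τ := by linarith
  set a := csAMin ψ σ τ x t
  set A := ∫ r in (t - τ)..t, m r
  have ha : 0 ≤ a := csAMin_nonneg hψpos t
  have hA : 0 ≤ A := integral_nonneg_of_eqOn_csMaxDer hmv ht' (by linarith)
  rcases (csDiam_nonneg v t).eq_or_lt with hzero | hpos
  · have hmin : IsLocalMin (csDiam v) t :=
      Eventually.of_forall fun s => hzero ▸ csDiam_nonneg v s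
    rw [hmin.deriv_eq_zero, ← hzero]
    linarith
  obtain ⟨p, q, hpq⟩ := exists_csDiam_eq v t
  set T := csDiam v t
  set y := v p t - v q t
  have hqp : T = ‖v q t - v p t‖ := by rw [hpq, norm_sub_rev]
  have hp := inner_deriv_le_of_forall_inner_le hψpos hψbdd hσ hστ hvder hode hm hmv ht
    (inner_le_inner_of_csDiam_eq v t hpq)
  have hq := inner_deriv_le_of_forall_inner_le hψpos hψbdd hσ hστ hvder hode hm hmv ht
    (inner_le_inner_of_csDiam_eq v t hqp)
  have hsum : ∑ j, ⟪y, v j t - v p t⟫ + ∑ j, ⟪v q t - v p t, v j t - v q t⟫ = -(N * (T * T)) := by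
    have hterm : ∀ j, ⟪y, v j t - v p t⟫ + ⟪v q t - v p t, v j t - v q t⟫ = -⟪y, y⟫ :=
      fun j => by simp only [y, inner_sub_left, inner_sub_right]; ring
    simp only [← Finset.sum_add_distrib, hterm, Finset.sum_const, Finset.card_univ,
      Fintype.card_fin, nsmul_eq_mul, real_inner_self_eq_norm_mul_norm, hpq]
    ring
  have hderiv : T * deriv (csDiam v) t = ⟪y, v' p t⟫ + ⟪v q t - v p t, v' q t⟫ := by
    rw [mul_deriv_eq_inner_of_norm_le hdiff
      ((hvder p t (by linarith)).sub (hvder q t (by linarith)))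
      (fun s => norm_sub_le_csDiam v s p q) hpq.symm, Pi.sub_apply, inner_sub_right,
      ← neg_sub (v p t), inner_neg_left]
    ring
  have hN : (0 : ℝ) ≤ N := N.cast_nonneg
  refine le_of_mul_le_mul_left ?_ hpos
  rw [hderiv]
  nlinarith [mul_nonneg (mul_nonneg ha hpos.le) hpos.le]

lemma integral_le_integral_csDiam_add (hvc : ∀ i, ContinuousOn (v i) (Ici (-τ))) {t : ℝ}
    (ht : 2 * τ < t) :
    ∫ r in (t - τ)..t, m r ≤
      (∫ s in (t - τ)..t, csDiam v (s - τ)) + τ * ∫ r in (t - 2 * τ)..t, m r := by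
  have hτ : 0 ≤ τ := hσ.trans hστ
  set B := ∫ r in (t - 2 * τ)..t, m r
  have hpt : ∀ r ∈ Icc (t - τ) t, m r ≤ csDiam v (r - τ) + B := fun r hr => by
    rw [← hmv (show 0 < r by linarith [hr.1])]
    refine (csMaxDer_le_csDiam_add_integral hψpos hψbdd hσ hστ hvder hode hm hmv
      (by linarith [hr.1])).trans (add_le_add_right ?_ _)
    refine intervalIntegral.integral_mono_interval (by linarith [hr.1]) (by linarith) hr.2
      ((ae_restrict_iff' measurableSet_Ioc).2 <| ae_of_all _ fun s hs =>
        nonneg_of_eqOn_csMaxDer hmv (by linarith [hs.1])) (hm.intervalIntegrable _ _)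
  have hdc : IntervalIntegrable (fun s => csDiam v (s - τ)) volume (t - τ) t :=
    (continuousOn_csDiam v hvc).intervalIntegrable_comp_sub_const (by linarith) (by linarith)
  calc ∫ r in (t - τ)..t, m r ≤ ∫ s in (t - τ)..t, (csDiam v (s - τ) + B) :=
        intervalIntegral.integral_mono_on (by linarith) (hm.intervalIntegrable _ _)
          (hdc.add intervalIntegrable_const) hpt
    _ = (∫ s in (t - τ)..t, csDiam v (s - τ)) + τ * B := by
        rw [intervalIntegral.integral_add hdc intervalIntegrable_const,
          intervalIntegral.integral_const, smul_eq_mul]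
        ring

lemma exists_hasDerivAt_csG_le (hN : 2 ≤ N) (hτ : 0 < τ) {β : ℝ} (hβ : 0 < β)
    (hβτ : 0 ≤ 2 * β * rexp (-(2 * τ)) - 4 * τ - β) (hvc : ∀ i, ContinuousOn (v i) (Ici (-τ)))
    {t : ℝ} (ht : 2 * τ < t) (hdiff : DifferentiableAt ℝ (csDiam v) t) :
    ∃ D : ℝ, HasDerivAt (csG β τ v v') D t ∧
      D ≤ 4 * (∫ s in (t - τ)..t, csG β τ v v' (s - τ))
        - (N - 1) * csAMin ψ σ τ x t * csG β τ v v' t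
        + β * (1 - rexp (-(2 * τ))) * csG β τ v v' (t - τ) := by
  refine ⟨_, hasDerivAt_csG hτ.le hm hmv ht hdiff, ?_⟩
  set E := rexp (-(2 * τ))
  set A := ∫ r in (t - τ)..t, m r
  set B := ∫ r in (t - 2 * τ)..t, m r
  set K := expMemory m (t - 2 * τ) t
  have hm0 : ∀ r ∈ Ioc (t - 2 * τ) t, 0 ≤ m r := fun r hr =>
    nonneg_of_eqOn_csMaxDer hmv (by linarith [hr.1])
  have hA : 0 ≤ A := integral_nonneg_of_eqOn_csMaxDer hmv (by linarith) (by linarith)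
  have hAB : A ≤ B := intervalIntegral.integral_mono_interval (by linarith) (by linarith) le_rfl
    ((ae_restrict_iff' measurableSet_Ioc).2 (ae_of_all _ hm0)) (hm.intervalIntegrable _ _)
  have hK : 0 ≤ K := (expMemory_nonneg (csMaxDer_nonneg v') (by linarith)).trans_eq
    (expMemory_congr hmv (by linarith) (by linarith))
  have hGt : csG β τ v v' t = csDiam v t + β * K := by
    rw [csG_eq_expMemory hmv (by linarith), max_eq_right (by linarith)]
  have hdv : deriv (csDiam v) t ≤ -((N - 1) * csAMin ψ σ τ x t * csDiam v t) + 4 * A :=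
    deriv_csDiam_le hψpos hψbdd hσ hστ hvder hode hm hmv (by linarith) hdiff
  have hmt : m t ≤ csDiam v (t - τ) + A := hmv (show 0 < t by linarith) ▸
    csMaxDer_le_csDiam_add_integral hψpos hψbdd hσ hστ hvder hode hm hmv (by linarith)
  have hmem : A ≤ (∫ s in (t - τ)..t, csDiam v (s - τ)) + τ * B :=
    integral_le_integral_csDiam_add hψpos hψbdd hσ hστ hvder hode hm hmv hvc ht
  have hGint : (∫ s in (t - τ)..t, csDiam v (s - τ)) ≤ ∫ s in (t - τ)..t, csG β τ v v' (s - τ) :=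
    intervalIntegral.integral_mono_on (by linarith)
      ((continuousOn_csDiam v hvc).intervalIntegrable_comp_sub_const (by linarith) (by linarith))
      ((continuousOn_csG hτ.le hvc hm hmv).intervalIntegrable_comp_sub_const (by linarith)
        (by linarith)) fun s hs =>
      csDiam_le_csG hβ.le hτ.le (by linarith [hs.1])
  have ha := csAMin_nonneg (σ := σ) (τ := τ) (x := x) hψpos t
  have haN := mul_csAMin_le_one (σ := σ) (τ := τ) (x := x) hN hψbdd t
  have hβE : 0 ≤ β * (1 - E) := mul_nonneg hβ.le (sub_nonneg.2 (exp_le_one_iff.2 (by linarith)))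
  have hGτ : csDiam v (t - τ) ≤ csG β τ v v' (t - τ) := csDiam_le_csG hβ.le hτ.le (by linarith)
  rw [hGt]
  linarith [mul_le_mul_of_nonneg_left hmt hβE, mul_le_mul_of_nonneg_left hAB hβE,
    mul_le_mul_of_nonneg_left hGτ hβE, mul_nonneg hβτ (hA.trans hAB),
    mul_le_of_le_one_left (mul_nonneg hβ.le hK) haN]

end Consensus

theorem stmt_12_general
    (N d : ℕ) (hN : 2 ≤ N)
    (σ τ : ℝ) (hσ : 0 ≤ σ) (hστ : σ ≤ τ) (hτ : 0 < τ)
    (β : ℝ) (hβ : 0 < β)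
    (hβτ : 0 ≤ 2 * β * Real.exp (-(2 * τ)) - 4 * τ - β)
    (ψ : ℝ → ℝ)
    (hψpos : ∀ s, 0 ≤ s → 0 < ψ s)
    (hψcont : ContinuousOn ψ (Set.Ici 0))
    (hψbdd : ∀ s, 0 ≤ s → ψ s ≤ 1)
    (x v v' : Fin N → ℝ → EuclideanSpace ℝ (Fin d))
    (hxc : ∀ i, ContinuousOn (x i) (Set.Ici (-τ)))
    (hvc : ∀ i, ContinuousOn (v i) (Set.Ici (-τ)))
    (hvder : ∀ i, ∀ t > (0:ℝ), HasDerivAt (v i) (v' i t) t)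
    (hode : ∀ i, ∀ t > (0:ℝ),
      v' i t = ∑ j ∈ Finset.univ.erase i,
        (ψ ‖x i (t - σ) - x j (t - τ)‖ / (N - 1)) • (v j (t - τ) - v i (t - σ))) :
    ∀ᵐ t ∂(volume : Measure ℝ), t ∈ Set.Ioi (2 * τ) →
      ∃ D : ℝ, HasDerivAt (csG β τ v v') D t ∧
        D ≤ 4 * (∫ s in (t - τ)..t, csG β τ v v' (s - τ))
          - (N - 1) * csAMin ψ σ τ x t * csG β τ v v' t
          + β * (1 - Real.exp (-(2 * τ))) * csG β τ v v' (t - τ) := by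
  have : NeZero N := ⟨by omega⟩
  obtain ⟨m, hm, hmv⟩ := exists_continuous_eqOn_csMaxDer hστ hψcont hxc hvc hode
  filter_upwards [ae_differentiableAt_of_lipschitzOnWith_Icc
    (lipschitzOnWith_csDiam hvder hm hmv hτ)] with t hdiff (ht : 2 * τ < t)
  exact exists_hasDerivAt_csG_le hψpos hψbdd hσ hστ hvder hode hm hmv hN hτ hβ hβτ hvc ht
    (hdiff (by linarith))

theorem stmt_12
    (N d : ℕ) (hN : 2 ≤ N) (hd : 1 ≤ d)
    (σ τ : ℝ) (hσ : 0 ≤ σ) (hστ : σ ≤ τ) (hτ : 0 < τ)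
    (β : ℝ) (hβ : 0 < β)
    (hβτ : 0 ≤ 2 * β * Real.exp (-(2 * τ)) - 4 * τ - β)
    (ψ : ℝ → ℝ)
    (hψpos : ∀ s, 0 ≤ s → 0 < ψ s)
    (hψcont : ContinuousOn ψ (Set.Ici 0))
    (hψmono : ∀ s t, 0 ≤ s → s ≤ t → ψ t ≤ ψ s)
    (hψbdd : ∀ s, 0 ≤ s → ψ s ≤ 1)
    (x v v' : Fin N → ℝ → EuclideanSpace ℝ (Fin d))
    (hxc : ∀ i, ContinuousOn (x i) (Set.Ici (-τ)))
    (hvc : ∀ i, ContinuousOn (v i) (Set.Ici (-τ)))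
    (hxder : ∀ i, ∀ t, -τ < t → HasDerivAt (x i) (v i t) t)
    (hvder : ∀ i, ∀ t > (0:ℝ), HasDerivAt (v i) (v' i t) t)
    (hode : ∀ i, ∀ t > (0:ℝ),
      v' i t = ∑ j ∈ Finset.univ.erase i,
        (ψ ‖x i (t - σ) - x j (t - τ)‖ / (N - 1)) • (v j (t - τ) - v i (t - σ))) :
    ∀ᵐ t ∂(volume : Measure ℝ), t ∈ Set.Ioi (2 * τ) →
      ∃ D : ℝ, HasDerivAt (csG β τ v v') D t ∧
        D ≤ 4 * (∫ s in (t - τ)..t, csG β τ v v' (s - τ))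
          - (N - 1) * csAMin ψ σ τ x t * csG β τ v v' t
          + β * (1 - Real.exp (-(2 * τ))) * csG β τ v v' (t - τ) :=
  stmt_12_general N d hN σ τ hσ hστ hτ β hβ hβτ ψ hψpos hψcont hψbdd x v v' hxc hvc hvder hode
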